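/- arXiv:2505.24529 — 3 statements merged into one kernel-verified Lean document; each statement's English description precedes it below -/
import Mathlib

section
/- Let $\mathcal{X}$ be a space, $\mu$ a measure, $f, g$ probability densities, $r : \mathcal{X} \to (0,\infty)$, and $n, m$ positive integers. Define $h(n,f,m,g,r) = \frac{nf + mg}{n + \lambda_0 m r}$ where $\lambda_0 > 0$ is the unique constant making $h$ a density, and define $\psi(n,f,m,g,r) = \frac{n+m}{m}(f - h(n,f,m,g,r))$. Then $\psi(n,f,m,g,r) = -\psi(m,g,n,f,1/r)$, i.e.\ $\psi$ changes sign under swapping the roles of the two samples and taking the reciprocal of $r$. -/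
/-!
Write `h = (n f + m g) / (n + λ m r)` and `h' = (m g + n f) / (m + λ⁻¹ n r⁻¹)`.
Pointwise `h' = (λ r / m) h`, and `λ m r h = (n f + m g) - n h` integrates to `(n + m) - n = m`,
so `h'` is a density. By uniqueness of the normalizing constant `θ₀ = λ⁻¹`, and with this value
the antisymmetry of `ψ` is an identity between rational functions.
-/

open MeasureTheory

section SwappedRatio

variable {n m lam r : ℝ} (hn : 0 < n) (hm : 0 < m) (hlam : 0 < lam) (hr : 0 < r)
include hn hm hlam hr

theorem swapped_ratio_eq (a b : ℝ) :
    (m * b + n * a) / (m + lam⁻¹ * n * r⁻¹)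
      = m⁻¹ * (lam * m * r * ((n * a + m * b) / (n + lam * m * r))) := by
  have hD : n + lam * m * r ≠ 0 := by positivity
  field_simp
  ring

theorem psi_swap_eq_neg (a b : ℝ) :
    (n + m) / m * (a - (n * a + m * b) / (n + lam * m * r))
      = -((m + n) / n * (b - (m * b + n * a) / (m + lam⁻¹ * n * r⁻¹))) := by
  have hD : n + lam * m * r ≠ 0 := by positivity
  have hD' : m + lam⁻¹ * n * r⁻¹ ≠ 0 := by positivity
  field_simp
  ring

end SwappedRatio

theorem integral_mul_div_const_add {X : Type*} [MeasurableSpace X] {μ : Measure X}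
    {a : ℝ} {s w : X → ℝ} (hw : ∀ x, a + w x ≠ 0) (hs : Integrable s μ)
    (hq : Integrable (fun x => s x / (a + w x)) μ) :
    ∫ x, w x * (s x / (a + w x)) ∂μ = ∫ x, s x ∂μ - a * ∫ x, s x / (a + w x) ∂μ := by
  have hsplit : (fun x => w x * (s x / (a + w x))) = fun x => s x - a * (s x / (a + w x)) := by
    funext x
    field_simp [hw x]
    ring
  rw [hsplit, integral_sub hs (hq.const_mul a), integral_const_mul]

theorem integral_swapped_ratio_eq_one {X : Type*} [MeasurableSpace X] {μ : Measure X}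
    {f g r : X → ℝ} {n m lam : ℝ} (hn : 0 < n) (hm : 0 < m) (hlam : 0 < lam)
    (hr : ∀ x, 0 < r x) (hf : Integrable f μ) (hg : Integrable g μ)
    (hf1 : ∫ x, f x ∂μ = 1) (hg1 : ∫ x, g x ∂μ = 1)
    (hnorm : ∫ x, (n * f x + m * g x) / (n + lam * m * r x) ∂μ = 1) :
    ∫ x, (m * g x + n * f x) / (m + lam⁻¹ * n * (r x)⁻¹) ∂μ = 1 := by
  have hs : Integrable (fun x => n * f x + m * g x) μ := (hf.const_mul n).add (hg.const_mul m)
  have hs1 : ∫ x, n * f x + m * g x ∂μ = n + m := by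
    rw [integral_add (hf.const_mul n) (hg.const_mul m), integral_const_mul, integral_const_mul,
      hf1, hg1, mul_one, mul_one]
  have hq := Integrable.of_integral_ne_zero (hnorm.trans_ne one_ne_zero)
  have hmass := integral_mul_div_const_add (w := fun x => lam * m * r x)
    (fun x => (by have := hr x; positivity : n + lam * m * r x ≠ 0)) hs hq
  simp only [swapped_ratio_eq hn hm hlam (hr _), integral_const_mul, hmass, hs1, hnorm]
  field_simp
  ring

theorem stmt3_general {X : Type*} [MeasurableSpace X] (μ : Measure X)
    (f g r : X → ℝ) (n m : ℕ) (hn : 0 < n) (hm : 0 < m)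
    (hr0 : ∀ x, 0 < r x)
    (hfint : Integrable f μ) (hgint : Integrable g μ)
    (hf1 : ∫ x, f x ∂μ = 1) (hg1 : ∫ x, g x ∂μ = 1)
    (lam0 : ℝ) (hlam0 : 0 < lam0)
    (hnorm : ∫ x, ((n : ℝ) * f x + m * g x) / (n + lam0 * m * r x) ∂μ = 1)
    (theta0 : ℝ)
    (huniq : ∀ θ : ℝ, 0 < θ →
      (∫ x, ((m : ℝ) * g x + n * f x) / (m + θ * n * (r x)⁻¹) ∂μ = 1) → θ = theta0) :
    ∀ x, ((n : ℝ) + m) / m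
        * (f x - ((n : ℝ) * f x + m * g x) / (n + lam0 * m * r x))
      = - (((m : ℝ) + n) / n
        * (g x - ((m : ℝ) * g x + n * f x) / (m + theta0 * n * (r x)⁻¹))) := by
  have hn' : (0 : ℝ) < n := Nat.cast_pos.2 hn
  have hm' : (0 : ℝ) < m := Nat.cast_pos.2 hm
  have htheta : lam0⁻¹ = theta0 := huniq _ (inv_pos.2 hlam0)
    (integral_swapped_ratio_eq_one hn' hm' hlam0 hr0 hfint hgint hf1 hg1 hnorm)
  intro x
  rw [← htheta]
  exact psi_swap_eq_neg hn' hm' hlam0 (hr0 x) (f x) (g x)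

theorem stmt3 {X : Type*} [MeasurableSpace X] (μ : Measure X)
    (f g r : X → ℝ) (n m : ℕ) (hn : 0 < n) (hm : 0 < m)
    (hf0 : ∀ x, 0 ≤ f x) (hg0 : ∀ x, 0 ≤ g x) (hr0 : ∀ x, 0 < r x)
    (hfint : Integrable f μ) (hgint : Integrable g μ)
    (hf1 : ∫ x, f x ∂μ = 1) (hg1 : ∫ x, g x ∂μ = 1)
    (hrf : Integrable (fun x => r x * f x) μ)
    (hgr : Integrable (fun x => g x / r x) μ)
    (lam0 : ℝ) (hlam0 : 0 < lam0)
    (hnorm : ∫ x, ((n : ℝ) * f x + m * g x) / (n + lam0 * m * r x) ∂μ = 1)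
    (theta0 : ℝ) (htheta0 : 0 < theta0)
    (hnorm' : ∫ x, ((m : ℝ) * g x + n * f x) / (m + theta0 * n * (r x)⁻¹) ∂μ = 1)
    (huniq : ∀ θ : ℝ, 0 < θ →
      (∫ x, ((m : ℝ) * g x + n * f x) / (m + θ * n * (r x)⁻¹) ∂μ = 1) → θ = theta0) :
    ∀ x, ((n : ℝ) + m) / m
        * (f x - ((n : ℝ) * f x + m * g x) / (n + lam0 * m * r x))
      = - (((m : ℝ) + n) / n
        * (g x - ((m : ℝ) * g x + n * f x) / (m + theta0 * n * (r x)⁻¹))) :=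
  stmt3_general μ f g r n m hn hm hr0 hfint hgint hf1 hg1 lam0 hlam0 hnorm theta0 huniq
end

section
/- Let $r_1, \ldots, r_{n+m}$ be positive reals and let $\widehat{\lambda} > 0$ satisfy $\sum_{i=1}^{n+m} \frac{1}{n + \widehat{\lambda} m r_i} = 1$. Let $\bar{R} = \frac{1}{n+m}\sum_i r_i$ be the arithmetic mean and $\check{R} = \left(\frac{1}{n+m}\sum_i r_i^{-1}\right)^{-1}$ the harmonic mean. Then $\bar{R}^{-1} \leq \widehat{\lambda} \leq \check{R}^{-1}$. -/
open Finset

lemma amhm_aux (N : ℕ) (b : Fin N → ℝ) (hb : ∀ i, 0 < b i)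
    (h : ∑ i, 1 / b i = 1) : (N : ℝ) ^ 2 ≤ ∑ i, b i := by
  have key := Finset.sum_sq_le_sum_mul_sum_of_sq_eq_mul (Finset.univ : Finset (Fin N))
    (r := fun _ => (1 : ℝ)) (f := b) (g := fun i => 1 / b i)
    (fun i _ => (hb i).le) (fun i _ => (one_div_pos.mpr (hb i)).le)
    (fun i _ => by rw [one_pow, mul_one_div, div_self (hb i).ne'])
  rw [h, mul_one] at key
  simpa using key

theorem stmt6 (n m : ℕ) (hn : 0 < n) (hm : 0 < m)
    (r : Fin (n + m) → ℝ) (hr : ∀ i, 0 < r i)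
    (lam : ℝ) (hlam : 0 < lam)
    (hnorm : ∑ i, (1 : ℝ) / (n + lam * m * r i) = 1) :
    ((1 / ((n : ℝ) + m)) * ∑ i, r i)⁻¹ ≤ lam ∧
    lam ≤ (1 / ((n : ℝ) + m)) * ∑ i, (r i)⁻¹ := by
  have hN : (0 : ℝ) < (n : ℝ) + m := by positivity
  have hn' : (0 : ℝ) < n := by positivity
  have hm' : (0 : ℝ) < m := by positivity
  have hNcast : ((n + m : ℕ) : ℝ) = (n : ℝ) + m := by push_cast; ring
  have ha : ∀ i, (0 : ℝ) < (n : ℝ) + lam * m * r i := fun i => by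
    have := hr i; positivity
  have hS : (0 : ℝ) < ∑ i, r i := Finset.sum_pos (fun i _ => hr i) ⟨⟨0, by omega⟩, by simp⟩
  -- Lower bound
  have h1 := amhm_aux (n + m) (fun i => (n : ℝ) + lam * m * r i) ha hnorm
  have hsum1 : ∑ i, ((n : ℝ) + lam * m * r i)
      = ((n : ℝ) + m) * n + lam * m * ∑ i, r i := by
    rw [Finset.sum_add_distrib, ← Finset.mul_sum]
    simp [hNcast]
  rw [hsum1, hNcast] at h1
  have hlow : (n : ℝ) + m ≤ lam * ∑ i, r i := by nlinarith [h1]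
  constructor
  · rw [inv_le_iff_one_le_mul₀ (by positivity)]
    calc (1:ℝ) = ((n:ℝ)+m) * (1 / ((n : ℝ) + m)) := by field_simp
    _ ≤ (lam * ∑ i, r i) * (1 / ((n : ℝ) + m)) := by gcongr
    _ = lam * (1 / ((n : ℝ) + m) * ∑ i, r i) := by ring
  -- Upper bound: apply the lemma to b i = (n + lam m r i)/(lam * r i)
  · have hb : ∀ i, (0:ℝ) < ((n : ℝ) + lam * m * r i) / (lam * r i) := fun i => by
      have := hr i; have := ha i; positivity
    have hnorm2 : ∑ i, 1 / (((n : ℝ) + lam * m * r i) / (lam * r i)) = 1 := by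
      have hterm : ∀ i, 1 / (((n : ℝ) + lam * m * r i) / (lam * r i))
          = (1 / m) * (1 - n * (1 / ((n : ℝ) + lam * m * r i))) := by
        intro i
        have hri := hr i
        have hai := (ha i).ne'
        field_simp
        ring
      rw [Finset.sum_congr rfl (fun i _ => hterm i), ← Finset.mul_sum,
        Finset.sum_sub_distrib, ← Finset.mul_sum, hnorm]
      simp [hNcast]
      field_simp
    have h2 := amhm_aux (n + m) _ hb hnorm2
    have hterm2 : ∀ i, ((n : ℝ) + lam * m * r i) / (lam * r i)
        = (n / lam) * (r i)⁻¹ + m := by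
      intro i
      have hri := (hr i).ne'
      field_simp
    have hsum2 : ∑ i, ((n : ℝ) + lam * m * r i) / (lam * r i)
        = (n / lam) * (∑ i, (r i)⁻¹) + ((n : ℝ) + m) * m := by
      rw [Finset.sum_congr rfl (fun i _ => hterm2 i), Finset.sum_add_distrib,
        ← Finset.mul_sum]
      simp [hNcast]
    rw [hsum2, hNcast] at h2
    have hT : ((n : ℝ) + m) * lam ≤ ∑ i, (r i)⁻¹ := by
      have h3 : ((n:ℝ)+m) * n ≤ (n / lam) * (∑ i, (r i)⁻¹) := by nlinarith
      rw [div_mul_eq_mul_div, le_div_iff₀ hlam] at h3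
      nlinarith
    calc lam = ((n:ℝ)+m) * lam / ((n:ℝ)+m) := by field_simp
    _ ≤ (∑ i, (r i)⁻¹) / ((n:ℝ)+m) := by gcongr
    _ = 1 / ((n : ℝ) + m) * ∑ i, (r i)⁻¹ := by ring
end

section
/- Let $Z_1, \ldots, Z_{n+m}$ take values in a finite set $\{0, \ldots, J\}$ with category counts $\mathrm{tot}_j = \#\{i : Z_i = j\}$, and let $r_0, \ldots, r_J > 0$. For $\sigma$ drawn from the distribution on $\mathcal{S}_{n+m}$ proportional to $\prod_{i=n+1}^{n+m} r_{Z_{\sigma(i)}}$, define $N^\sigma_j = \#\{i \in \{n+1,\ldots,n+m\} : Z_{\sigma(i)} = j\}$. Then for every vector $w = (w_0, \ldots, w_J)$ with $\sum_j w_j = m$ and $\max(0, \mathrm{tot}_j - n) \leq w_j \leq \min(m, \mathrm{tot}_j)$ for all $j$, the number of permutations $\sigma$ with $(N^\sigma_0, \ldots, N^\sigma_J) = w$ equals $n!\, m! \prod_{j=0}^{J} \binom{\mathrm{tot}_j}{w_j}$, and consequently $\mathbb{P}\{(N^\sigma_0, \ldots, N^\sigma_J) = w\} \propto \prod_{j=0}^{J}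 r_j^{w_j} \binom{\mathrm{tot}_j}{w_j}$ (Fisher's multivariate noncentral hypergeometric distribution). -/
open Finset

/-- Number of data points (out of `Z`) in category `j`. -/
def catTot (n m J : ℕ) (Z : Fin (n + m) → Fin (J + 1)) (j : Fin (J + 1)) : ℕ :=
  (Finset.univ.filter (fun i => Z i = j)).card

/-- Number of the last `m` permuted data points in category `j`. -/
def catCount (n m J : ℕ) (Z : Fin (n + m) → Fin (J + 1))
    (σ : Equiv.Perm (Fin (n + m))) (j : Fin (J + 1)) : ℕ :=
  (Finset.univ.filter (fun i : Fin (n + m) => n ≤ (i : ℕ) ∧ Z (σ i) = j)).card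

/-- The unnormalized sampling weight `∏_{i > n} r_{Z_{σ(i)}}` of a permutation. -/
def permWeight (n m J : ℕ) (Z : Fin (n + m) → Fin (J + 1)) (r : Fin (J + 1) → ℝ)
    (σ : Equiv.Perm (Fin (n + m))) : ℝ :=
  ∏ i ∈ Finset.univ.filter (fun i : Fin (n + m) => n ≤ (i : ℕ)), r (Z (σ i))

/-!
A permutation `σ` enters both the count and the weight only through the set `S = σ(T)` of data
points sent to the last `m` positions `T`: the category counts are `#(S ∩ Z⁻¹ j)`, and the weight
is `∏ j, r j ^ #(S ∩ Z⁻¹ j)`. Each `m`-set `S` is hit by exactly `m! n!` permutations (a bijection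
`T → S` glued to one `Tᶜ → Sᶜ`), and the sets `S` with prescribed counts `w` are chosen
category by category, giving `∏ j, (tot j).choose (w j)` of them.
-/

open scoped Nat
open Equiv

namespace Equiv.Perm

variable {α : Type*}

def subtypeCongrEquiv (p q : α → Prop) [DecidablePred p] [DecidablePred q] :
    ({x // p x} ≃ {x // q x}) × ({x // ¬p x} ≃ {x // ¬q x}) ≃
      {σ : Perm α // ∀ x, p x ↔ q (σ x)} where
  toFun ef := ⟨Equiv.subtypeCongr ef.1 ef.2, fun x => by
    by_cases h : p x <;> simp [Equiv.subtypeCongr, h, (ef.1 ⟨x, _⟩).2, (ef.2 ⟨x, _⟩).2]⟩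
  invFun σ := ⟨σ.1.subtypeEquiv σ.2, σ.1.subtypeEquiv fun x => not_congr (σ.2 x)⟩
  left_inv ef := by
    ext x
    · simp [Equiv.subtypeCongr, x.2]
    · simp [Equiv.subtypeCongr, x.2]
  right_inv σ := by
    ext x
    by_cases h : p x <;> simp [Equiv.subtypeCongr, h]

theorem image_eq_iff [DecidableEq α] (σ : Perm α) (s t : Finset α) :
    s.image σ = t ↔ ∀ x, x ∈ s ↔ σ x ∈ t := by
  refine ⟨?_, fun h => ?_⟩
  · rintro rfl x
    simp [σ.injective.eq_iff]
  · ext y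
    obtain ⟨x, rfl⟩ := σ.surjective y
    simp [σ.injective.eq_iff, h]

theorem card_filter_image_eq [Fintype α] [DecidableEq α] {s t : Finset α} (h : #s = #t) :
    #{σ : Perm α | s.image σ = t} = (#s)! * (Fintype.card α - #s)! := by
  have e₁ : {x // x ∈ s} ≃ {x // x ∈ t} := s.equivOfCardEq h
  have e₂ : {x // x ∉ s} ≃ {x // x ∉ t} := Fintype.equivOfCardEq <| by
    simp [Fintype.card_subtype_compl, h]
  simp_rw [image_eq_iff, ← Fintype.card_subtype, ← Fintype.card_congr (subtypeCongrEquiv _ _),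
    Fintype.card_prod, Fintype.card_equiv e₁, Fintype.card_equiv e₂, Fintype.card_coe,
    Fintype.card_subtype_compl, Fintype.card_coe]

end Equiv.Perm

theorem Finset.card_filter_forall_card_fiber_eq {α β : Type*} [Fintype α] [Fintype β]
    [DecidableEq α] [DecidableEq β] (f : α → β) (w : β → ℕ) :
    #{S : Finset α | ∀ j, #{x ∈ S | f x = j} = w j} = ∏ j, (#{x | f x = j}).choose (w j) := by
  have filter_biUnion {A : β → Finset α} (hA : ∀ i, ∀ x ∈ A i, f x = i) (j : β) :
      {x ∈ univ.biUnion A | f x = j} = A j := by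
    ext x
    simp only [mem_filter, mem_biUnion, mem_univ, true_and]
    exact ⟨fun ⟨⟨i, hx⟩, hj⟩ => hj ▸ hA i x hx ▸ hx, fun hx => ⟨⟨j, hx⟩, hA j x hx⟩⟩
  have mem_piFinset {A : β → Finset α} :
      A ∈ Fintype.piFinset (fun j => powersetCard (w j) {x | f x = j}) ↔
        ∀ i, (∀ x ∈ A i, f x = i) ∧ #(A i) = w i := by
    simp [subset_iff]
  simp_rw [← card_powersetCard, ← Fintype.card_piFinset]
  refine card_nbij' (fun S j => {x ∈ S | f x = j}) (fun A => univ.biUnion A) ?_ ?_ ?_ ?_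
  · intro S hS
    simp_all [subset_iff]
  · intro A hA
    rw [mem_coe, mem_piFinset] at hA
    simp [filter_biUnion fun i => (hA i).1, hA]
  · intro S _
    ext x
    simp
  · intro A hA
    rw [mem_coe, mem_piFinset] at hA
    exact funext (filter_biUnion fun i => (hA i).1)

section Sampling

variable {n m J : ℕ} (Z : Fin (n + m) → Fin (J + 1))

def tailPositions (n m : ℕ) : Finset (Fin (n + m)) := {i | n ≤ (i : ℕ)}

theorem card_tailPositions (n m : ℕ) : #(tailPositions n m) = m := by
  have := card_filter_add_card_filter_not (s := univ) (fun i : Fin (n + m) => (i : ℕ) < n)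
  simp only [not_lt, Fin.card_filter_val_lt, card_fin] at this
  rw [tailPositions]
  omega

theorem catCount_eq_card_filter_image (σ : Perm (Fin (n + m))) (j : Fin (J + 1)) :
    catCount n m J Z σ j = #{x ∈ (tailPositions n m).image σ | Z x = j} := by
  rw [filter_image, card_image_of_injective _ σ.injective, tailPositions, filter_filter]
  rfl

theorem permWeight_eq_prod_pow_catCount (r : Fin (J + 1) → ℝ) (σ : Perm (Fin (n + m))) :
    permWeight n m J Z r σ = ∏ j, r j ^ catCount n m J Z σ j := by
  simp_rw [catCount, ← filter_filter, ← prod_const]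
  rw [prod_fiberwise_eq_prod_filter', filter_true_of_mem fun _ _ => mem_univ _]
  rfl

theorem card_filter_catCount_eq {w : Fin (J + 1) → ℕ} (hw : ∑ j, w j = m) :
    #{σ : Perm (Fin (n + m)) | ∀ j, catCount n m J Z σ j = w j}
      = n ! * m ! * ∏ j, (catTot n m J Z j).choose (w j) := by
  set good : Finset (Finset (Fin (n + m))) := {S | ∀ j, #{x ∈ S | Z x = j} = w j}
  have card_good : #good = ∏ j, (catTot n m J Z j).choose (w j) := by
    unfold catTot
    -- `convert` absorbs the `Nat.decidableForallFin` instance chosen for `∀ j : Fin (J + 1)`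
    convert card_filter_forall_card_fiber_eq Z w
  have card_of_good {S} (hS : S ∈ good) : #S = m := by
    rw [card_eq_sum_card_fiberwise (f := Z) (t := univ) (by simp)]
    simpa [(mem_filter.1 hS).2] using hw
  calc #{σ : Perm (Fin (n + m)) | ∀ j, catCount n m J Z σ j = w j}
      = ∑ S ∈ good, #{σ : Perm (Fin (n + m)) | (tailPositions n m).image σ = S} := by
        rw [sum_card_fiberwise_eq_card_filter]
        simp [good, catCount_eq_card_filter_image]
    _ = #good * (m ! * n !) := by
        refine sum_const_nat fun S hS => ?_
        rw [Perm.card_filter_image_eq ((card_tailPositions n m).trans (card_of_good hS).symm),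
          card_tailPositions, Fintype.card_fin, Nat.add_sub_cancel]
    _ = n ! * m ! * ∏ j, (catTot n m J Z j).choose (w j) := by
        rw [card_good]
        ring

theorem sum_permWeight_filter_catCount_eq (r : Fin (J + 1) → ℝ) (w : Fin (J + 1) → ℕ) :
    ∑ σ : Perm (Fin (n + m)) with ∀ j, catCount n m J Z σ j = w j, permWeight n m J Z r σ
      = #{σ : Perm (Fin (n + m)) | ∀ j, catCount n m J Z σ j = w j} * ∏ j, r j ^ w j := by
  rw [← nsmul_eq_mul, ← sum_const]
  refine sum_congr rfl fun σ hσ => ?_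
  simp only [permWeight_eq_prod_pow_catCount, (mem_filter.1 hσ).2]

end Sampling

theorem stmt8_general (n m J : ℕ)
    (Z : Fin (n + m) → Fin (J + 1)) (r : Fin (J + 1) → ℝ) (hr : ∀ j, 0 < r j) :
    ∃ c : ℝ, 0 < c ∧
      ∀ w : Fin (J + 1) → ℕ,
        (∑ j, w j = m) →
        (∀ j, catTot n m J Z j - n ≤ w j ∧ w j ≤ min m (catTot n m J Z j)) →
        ((Finset.univ.filter
            (fun σ : Equiv.Perm (Fin (n + m)) => ∀ j, catCount n m J Z σ j = w j)).card
          = n.factorial * m.factorial * ∏ j, (catTot n m J Z j).choose (w j)) ∧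
        ((∑ σ ∈ Finset.univ.filter
              (fun σ : Equiv.Perm (Fin (n + m)) => ∀ j, catCount n m J Z σ j = w j),
            permWeight n m J Z r σ)
          / (∑ σ : Equiv.Perm (Fin (n + m)), permWeight n m J Z r σ)
          = c * ∏ j, r j ^ (w j) * ((catTot n m J Z j).choose (w j) : ℝ)) := by
  have total_pos : 0 < ∑ σ : Perm (Fin (n + m)), permWeight n m J Z r σ :=
    sum_pos (fun σ _ => prod_pos fun i _ => hr _) univ_nonempty
  refine ⟨n ! * m ! / ∑ σ : Perm (Fin (n + m)), permWeight n m J Z r σ, by positivity,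
    fun w hw _ => ?_⟩
  have card_eq := card_filter_catCount_eq Z hw
  refine ⟨card_eq, ?_⟩
  rw [sum_permWeight_filter_catCount_eq, card_eq, prod_mul_distrib]
  push_cast
  field_simp

theorem stmt8 (n m J : ℕ) (hn : 0 < n) (hm : 0 < m) (hJ : 1 ≤ J)
    (Z : Fin (n + m) → Fin (J + 1)) (r : Fin (J + 1) → ℝ) (hr : ∀ j, 0 < r j) :
    ∃ c : ℝ, 0 < c ∧
      ∀ w : Fin (J + 1) → ℕ,
        (∑ j, w j = m) →
        (∀ j, catTot n m J Z j - n ≤ w j ∧ w j ≤ min m (catTot n m J Z j)) →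
        ((Finset.univ.filter
            (fun σ : Equiv.Perm (Fin (n + m)) => ∀ j, catCount n m J Z σ j = w j)).card
          = n.factorial * m.factorial * ∏ j, (catTot n m J Z j).choose (w j)) ∧
        ((∑ σ ∈ Finset.univ.filter
              (fun σ : Equiv.Perm (Fin (n + m)) => ∀ j, catCount n m J Z σ j = w j),
            permWeight n m J Z r σ)
          / (∑ σ : Equiv.Perm (Fin (n + m)), permWeight n m J Z r σ)
          = c * ∏ j, r j ^ (w j) * ((catTot n m J Z j).choose (w j) : ℝ)) :=
  stmt8_general n m J Z r hr
end
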